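/- arXiv:1609.01783 — 3 statements merged into one kernel-verified Lean document; each statement's English description precedes it below -/
import Mathlib

section
/- Let k ≥ 2, let η be a permutation of {1,…,k}, and let L : {1,…,k} → ℕ be injective. Let t ∈ {1,…,k−1} and suppose that the coefficient 1 − δ[η(k) > η(t)] − δ[L(η(k)) < L(η(t))] is nonzero, where δ[P] equals 1 if P holds and 0 otherwise. Then the tuple L ∘ (η(t) η(k)), obtained from L by interchanging the entries at positions η(t) and η(k), is strictly smaller than L in the reverse Semitic lexicographic order. (For a strictly increasing tuple i_1 < ⋯ < i_k the condition i_{η(k)} > i_{η(t)} appearing in the paper is equivalent to η(k) > η(t), so this is the triangularity assertion of the paper's Lemma 4.2.) -/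
/-- The reverse Semitic lexicographic order on tuples `Fin k → ℕ`:
`K < L` iff `K ≠ L` and, at the largest position `p` where they differ,
one has `K p > L p`. -/
def RevSemLt (k : ℕ) (K L : Fin k → ℕ) : Prop :=
  K ≠ L ∧ ∀ p : Fin k, (K p ≠ L p ∧ ∀ q : Fin k, p < q → K q = L q) → L p < K p

/-- Let `k ≥ 2`, `η` a permutation of the `k` positions, `L` an injective tuple, and let
`t` be a position other than the last one (positions `1,…,k-1` correspond to
`(t : ℕ) < k - 1`, the last position `k` being `⟨k-1, _⟩`).  If the coefficient
`1 − δ[η(k) > η(t)] − δ[L(η(k)) < L(η(t))]` is nonzero, then `L ∘ (η(t) η(k))` is strictly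
smaller than `L` in the reverse Semitic lexicographic order. -/
theorem swap_coeff_revSemLt (k : ℕ) (hk : 2 ≤ k) (η : Equiv.Perm (Fin k))
    (L : Fin k → ℕ) (hL : Function.Injective L)
    (t : Fin k) (ht : (t : ℕ) < k - 1)
    (hcoef : (1 : ℤ) - (if η ⟨k - 1, by omega⟩ > η t then 1 else 0)
        - (if L (η ⟨k - 1, by omega⟩) < L (η t) then 1 else 0) ≠ 0) :
    RevSemLt k (L ∘ Equiv.swap (η t) (η ⟨k - 1, by omega⟩)) L := by
  set a : Fin k := η t with ha
  set b : Fin k := η ⟨k - 1, by omega⟩ with hb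
  have hab : a ≠ b := by
    intro h
    have := η.injective h
    have : (t : ℕ) = k - 1 := congrArg Fin.val this
    omega
  have hLab : L a ≠ L b := fun h => hab (hL h)
  have hiff : a < b ↔ L b < L a := by
    by_cases h1 : a < b <;> by_cases h2 : L b < L a <;>
      simp only [gt_iff_lt, h1, h2, if_true, if_false] at hcoef <;>
      omega
  have hKa : (L ∘ Equiv.swap a b) a = L b := by simp [Equiv.swap_apply_left]
  have hKb : (L ∘ Equiv.swap a b) b = L a := by simp [Equiv.swap_apply_right]
  have hKo : ∀ p : Fin k, p ≠ a → p ≠ b → (L ∘ Equiv.swap a b) p = L p := by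
    intro p hp1 hp2; simp [Equiv.swap_apply_of_ne_of_ne hp1 hp2]
  constructor
  · intro h
    have := congrFun h a
    rw [hKa] at this
    exact hLab this.symm
  · rintro p ⟨hp, hmax⟩
    have hpab : p = a ∨ p = b := by
      by_contra h
      push_neg at h
      exact hp (hKo p h.1 h.2)
    rcases lt_trichotomy a b with hlt | heq | hgt
    · -- largest diff is b; p must be b
      have hpb : p = b := by
        rcases hpab with rfl | rfl
        · have := hmax b hlt; rw [hKb] at this; exact (hLab this).elim
        · rfl
      subst hpb
      rw [hKb]
      exact hiff.mp hlt
    · exact absurd heq hab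
    · have hpa : p = a := by
        rcases hpab with rfl | rfl
        · rfl
        · have := hmax a hgt; rw [hKa] at this; exact (hLab this.symm).elim
      subst hpa
      rw [hKa]
      have h2 : ¬ L b < L a := fun h => absurd (hiff.mpr h) (not_lt.mpr hgt.le)
      omega
end

section
/- Let λ be a weight and let I = (i_1,…,i_k) and N = (n_1,…,n_k) be sequences in {1,…,m} and {1,…,n} respectively (repetitions allowed). Suppose that for every t ∈ {1,…,k}, ω_{i_t, n_t}(λ) = #{s < t : i_s = i_t} − #{s < t : n_s = n_t}. Set κ_t = λ_{(i_1,…,i_t)|(n_1,…,n_t)} for t = 0,…,k (so κ_0 = λ and κ_k = λ_{I|N}). Then κ_{t−1} ∼_sodd κ_t for each t = 1,…,k; in particular λ and λ_{I|N} are odd-linked. -/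
/-- A weight for `GL(m|n)`: a pair of integer-valued functions on `{1,…,m}` and `{1,…,n}`. -/
abbrev Weight (m n : ℕ) := (Fin m → ℤ) × (Fin n → ℤ)

/-- `ω_{ij}(λ) = λ⁺(i) + λ⁻(j) + m + 1 - i - j`, with 1-based indices encoded by `Fin`. -/
def omegaWt (m n : ℕ) (lam : Weight m n) (i : Fin m) (j : Fin n) : ℤ :=
  lam.1 i + lam.2 j + m + 1 - ((i : ℤ) + 1) - ((j : ℤ) + 1)

/-- `λ_{i|j}`: decrease `λ⁺(i)` by 1 and increase `λ⁻(j)` by 1. -/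
def singleShift (m n : ℕ) (lam : Weight m n) (i : Fin m) (j : Fin n) : Weight m n :=
  (fun i' => if i' = i then lam.1 i' - 1 else lam.1 i',
   fun j' => if j' = j then lam.2 j' + 1 else lam.2 j')

/-- `λ ∼_sodd μ`: simply-odd-linked weights. -/
def Sodd (m n : ℕ) (lam mu : Weight m n) : Prop :=
  ∃ (i : Fin m) (j : Fin n),
    (mu = singleShift m n lam i j ∨ lam = singleShift m n mu i j) ∧
      omegaWt m n lam i j = 0

/-- `λ ∼_odd μ`: a finite chain of simple odd links. -/
def OddLinked (m n : ℕ) : Weight m n → Weight m n → Prop :=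
  Relation.ReflTransGen (Sodd m n)

/-- The weight `λ_{(i_1,…,i_t)|(n_1,…,n_t)}` obtained by applying the first `t` shifts:
subtract from `λ⁺(i)` the number of `s < t` with `I s = i`, add to `λ⁻(j)` the number of
`s < t` with `N s = j`.  For `t = k` this is `λ_{I|N}`. -/
def prefShift (m n k : ℕ) (lam : Weight m n) (I : Fin k → Fin m) (N : Fin k → Fin n)
    (t : ℕ) : Weight m n :=
  (fun i => lam.1 i -
      ((Finset.univ.filter fun s : Fin k => (s : ℕ) < t ∧ I s = i).card : ℤ),
   fun j => lam.2 j +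
      ((Finset.univ.filter fun s : Fin k => (s : ℕ) < t ∧ N s = j).card : ℤ))

lemma card_filter_lt_succ {k : ℕ} (t : Fin k) (P : Fin k → Prop) [DecidablePred P] :
    (Finset.univ.filter fun s : Fin k => (s : ℕ) < (t : ℕ) + 1 ∧ P s).card =
    (Finset.univ.filter fun s : Fin k => (s : ℕ) < (t : ℕ) ∧ P s).card +
      (if P t then 1 else 0) := by
  have hsplit : (Finset.univ.filter fun s : Fin k => (s : ℕ) < (t : ℕ) + 1 ∧ P s)
      = (Finset.univ.filter fun s : Fin k => (s : ℕ) < (t : ℕ) ∧ P s)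
        ∪ (Finset.univ.filter fun s : Fin k => s = t ∧ P s) := by
    ext s
    simp only [Finset.mem_union, Finset.mem_filter, Finset.mem_univ, true_and]
    constructor
    · rintro ⟨hs, hp⟩
      rcases Nat.lt_succ_iff_lt_or_eq.mp hs with h | h
      · exact Or.inl ⟨h, hp⟩
      · exact Or.inr ⟨Fin.ext h, hp⟩
    · rintro (⟨hs, hp⟩ | ⟨rfl, hp⟩)
      · exact ⟨Nat.lt_succ_of_lt hs, hp⟩
      · exact ⟨Nat.lt_succ_self _, hp⟩
  have hdisj : Disjoint
      (Finset.univ.filter fun s : Fin k => (s : ℕ) < (t : ℕ) ∧ P s)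
      (Finset.univ.filter fun s : Fin k => s = t ∧ P s) := by
    rw [Finset.disjoint_left]
    rintro s hs1 hs2
    simp only [Finset.mem_filter, Finset.mem_univ, true_and] at hs1 hs2
    rcases hs2 with ⟨rfl, _⟩
    exact lt_irrefl _ hs1.1
  have hsingle : (Finset.univ.filter fun s : Fin k => s = t ∧ P s)
      = if P t then {t} else ∅ := by
    split
    · ext s
      simp only [Finset.mem_filter, Finset.mem_univ, true_and, Finset.mem_singleton]
      constructor
      · exact fun h => h.1
      · rintro rfl; exact ⟨rfl, by assumption⟩
    · ext s
      simp only [Finset.mem_filter, Finset.mem_univ, true_and, Finset.notMem_empty,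
        iff_false]
      rintro ⟨rfl, hp⟩; exact absurd hp (by assumption)
  rw [hsplit, Finset.card_union_of_disjoint hdisj, hsingle]
  split <;> simp

/-- Suppose that for every `t`,
`ω_{i_t,n_t}(λ) = #{s < t : i_s = i_t} − #{s < t : n_s = n_t}`.  Then the weights
`κ_t = λ_{(i_1,…,i_t)|(n_1,…,n_t)}` satisfy `κ_{t-1} ∼_sodd κ_t` for each `t = 1,…,k`;
in particular `λ` and `λ_{I|N}` are odd-linked. -/
theorem oddLinked_of_omega_eq_counts (m n k : ℕ) (lam : Weight m n)
    (I : Fin k → Fin m) (N : Fin k → Fin n)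
    (homega : ∀ t : Fin k, omegaWt m n lam (I t) (N t) =
        ((Finset.univ.filter fun s : Fin k => s < t ∧ I s = I t).card : ℤ) -
        ((Finset.univ.filter fun s : Fin k => s < t ∧ N s = N t).card : ℤ)) :
    (∀ t : ℕ, t < k →
        Sodd m n (prefShift m n k lam I N t) (prefShift m n k lam I N (t + 1))) ∧
      OddLinked m n lam (prefShift m n k lam I N k) := by
  have key : ∀ t : ℕ, t < k →
      Sodd m n (prefShift m n k lam I N t) (prefShift m n k lam I N (t + 1)) := by
    intro t ht
    set t' : Fin k := ⟨t, ht⟩ with ht'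
    refine ⟨I t', N t', Or.inl ?_, ?_⟩
    · unfold prefShift singleShift
      refine Prod.ext ?_ ?_ <;> funext x <;> simp only
      · have hc := card_filter_lt_succ t' (fun s => I s = x)
        rw [show ((t' : ℕ)) = t from rfl] at hc
        rw [hc]
        by_cases hx : x = I t' <;> simp [hx, eq_comm] <;> ring
      · have hc := card_filter_lt_succ t' (fun s => N s = x)
        rw [show ((t' : ℕ)) = t from rfl] at hc
        rw [hc]
        by_cases hx : x = N t' <;> simp [hx, eq_comm] <;> ring
    · have h := homega t'
      have hfI : (Finset.univ.filter fun s : Fin k => s < t' ∧ I s = I t')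
          = (Finset.univ.filter fun s : Fin k => (s : ℕ) < t ∧ I s = I t') := by
        apply Finset.filter_congr; intro s _; simp [Fin.lt_def, ht']
      have hfN : (Finset.univ.filter fun s : Fin k => s < t' ∧ N s = N t')
          = (Finset.univ.filter fun s : Fin k => (s : ℕ) < t ∧ N s = N t') := by
        apply Finset.filter_congr; intro s _; simp [Fin.lt_def, ht']
      rw [hfI, hfN] at h
      unfold omegaWt at h ⊢
      unfold prefShift
      simp only
      omega
  refine ⟨key, ?_⟩
  have hzero : prefShift m n k lam I N 0 = lam := by
    unfold prefShift
    refine Prod.ext ?_ ?_ <;> funext x <;> simp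
  have main : ∀ j : ℕ, j ≤ k → OddLinked m n lam (prefShift m n k lam I N j) := by
    intro j
    induction j with
    | zero => intro _; rw [hzero]; exact Relation.ReflTransGen.refl
    | succ j ih =>
        intro hj
        exact (ih (Nat.le_of_succ_le hj)).tail (key j hj)
  exact main k le_rfl
end

section
/- Let λ be a weight with all values of λ⁺ and λ⁻ nonnegative, and let I = (i_1,…,i_k) and N = (n_1,…,n_k) be sequences in {1,…,m} and {1,…,n} such that λ_{I|N} has all values nonnegative and such that for every t ∈ {1,…,k}, ω_{i_t, n_t}(λ) = #{s < t : i_s = i_t} − #{s < t : n_s = n_t}. Then λ ∼_podd λ_{I|N}: there is a chain λ = λ_1 ∼_sodd λ_2 ∼_sodd ⋯ ∼_sodd λ_r = λ_{I|N} of simply-odd-linked weights in which every weight of the chain is polynomial. -/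
/-- A polynomial weight: all values of both component functions are nonnegative. -/
def IsPolynomialWeight (m n : ℕ) (lam : Weight m n) : Prop :=
  (∀ i, 0 ≤ lam.1 i) ∧ (∀ j, 0 ≤ lam.2 j)

/-- A simple odd link between polynomial weights. -/
def PSodd (m n : ℕ) (lam mu : Weight m n) : Prop :=
  Sodd m n lam mu ∧ IsPolynomialWeight m n lam ∧ IsPolynomialWeight m n mu

lemma cnt_succ {k : ℕ} {α : Type*} [DecidableEq α] (f : Fin k → α) (t : Fin k) (a : α) :
    (Finset.univ.filter fun s : Fin k => (s : ℕ) < (t : ℕ) + 1 ∧ f s = a).card =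
    (Finset.univ.filter fun s : Fin k => (s : ℕ) < (t : ℕ) ∧ f s = a).card +
      (if f t = a then 1 else 0) := by
  have h : (Finset.univ.filter fun s : Fin k => (s : ℕ) < (t : ℕ) + 1 ∧ f s = a) =
      (Finset.univ.filter fun s : Fin k => (s : ℕ) < (t : ℕ) ∧ f s = a) ∪
      (Finset.univ.filter fun s : Fin k => s = t ∧ f s = a) := by
    ext s
    simp only [Finset.mem_filter, Finset.mem_union, Finset.mem_univ, true_and,
      Nat.lt_succ_iff_lt_or_eq, Fin.ext_iff, or_and_right]
  have hdisj : Disjoint (Finset.univ.filter fun s : Fin k => (s : ℕ) < (t : ℕ) ∧ f s = a)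
      (Finset.univ.filter fun s : Fin k => s = t ∧ f s = a) := by
    rw [Finset.disjoint_left]
    intro s hs hs'
    simp only [Finset.mem_filter, Finset.mem_univ, true_and] at hs hs'
    rw [hs'.1] at hs
    exact absurd hs.1 (lt_irrefl _)
  rw [h, Finset.card_union_of_disjoint hdisj]
  congr 1
  by_cases hf : f t = a
  · have : (Finset.univ.filter fun s : Fin k => s = t ∧ f s = a) = {t} := by
      ext s
      simp only [Finset.mem_filter, Finset.mem_univ, true_and, Finset.mem_singleton]
      constructor
      · exact fun h => h.1
      · rintro rfl; exact ⟨rfl, hf⟩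
    simp [this, hf]
  · have : (Finset.univ.filter fun s : Fin k => s = t ∧ f s = a) = ∅ := by
      ext s
      simp only [Finset.mem_filter, Finset.mem_univ, true_and, Finset.notMem_empty, iff_false]
      rintro ⟨rfl, h2⟩; exact hf h2
    simp [this, hf]

section Aux
variable (m n k : ℕ) (lam : Weight m n) (I : Fin k → Fin m) (N : Fin k → Fin n)

lemma prefShift_zero : prefShift m n k lam I N 0 = lam := by
  unfold prefShift
  have h1 : ∀ i, (Finset.univ.filter fun s : Fin k => (s : ℕ) < 0 ∧ I s = i) = ∅ := by
    intro i; ext s; simp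
  have h2 : ∀ j, (Finset.univ.filter fun s : Fin k => (s : ℕ) < 0 ∧ N s = j) = ∅ := by
    intro j; ext s; simp
  ext x
  · simp [h1]
  · simp [h2]

lemma prefShift_succ (t : Fin k) :
    prefShift m n k lam I N ((t : ℕ) + 1) =
      singleShift m n (prefShift m n k lam I N t) (I t) (N t) := by
  unfold prefShift singleShift
  ext x
  · simp only
    rw [cnt_succ I t x]
    by_cases h : x = I t
    · rw [if_pos h, if_pos h.symm]
      push_cast
      ring
    · rw [if_neg h, if_neg (fun hh => h hh.symm)]
      push_cast
      ring
  · simp only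
    rw [cnt_succ N t x]
    by_cases h : x = N t
    · rw [if_pos h, if_pos h.symm]
      push_cast
      ring
    · rw [if_neg h, if_neg (fun hh => h hh.symm)]
      push_cast
      ring

lemma prefShift_poly (hlam : IsPolynomialWeight m n lam)
    (hmu : IsPolynomialWeight m n (prefShift m n k lam I N k)) (t : ℕ) :
    IsPolynomialWeight m n (prefShift m n k lam I N t) := by
  constructor
  · intro i
    have hk := hmu.1 i
    have hle : (Finset.univ.filter fun s : Fin k => (s : ℕ) < t ∧ I s = i).card ≤
        (Finset.univ.filter fun s : Fin k => (s : ℕ) < k ∧ I s = i).card := by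
      apply Finset.card_le_card
      intro s hs
      simp only [Finset.mem_filter, Finset.mem_univ, true_and] at hs ⊢
      exact ⟨s.isLt, hs.2⟩
    simp only [prefShift] at hk ⊢
    have : ((Finset.univ.filter fun s : Fin k => (s : ℕ) < t ∧ I s = i).card : ℤ) ≤
        ((Finset.univ.filter fun s : Fin k => (s : ℕ) < k ∧ I s = i).card : ℤ) := by
      exact_mod_cast hle
    linarith
  · intro j
    have := hlam.2 j
    simp only [prefShift]
    positivity

end Aux

/-- Suppose `λ` is a polynomial weight, `λ_{I|N}` is a polynomial weight, and for every `t`,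
`ω_{i_t,n_t}(λ) = #{s < t : i_s = i_t} − #{s < t : n_s = n_t}`.  Then `λ ∼_podd λ_{I|N}`:
there is a chain of simple odd links from `λ` to `λ_{I|N}` in which every weight is
polynomial. -/
theorem poddLinked_of_omega_eq_counts (m n k : ℕ) (lam : Weight m n)
    (I : Fin k → Fin m) (N : Fin k → Fin n)
    (hlam : IsPolynomialWeight m n lam)
    (hmu : IsPolynomialWeight m n (prefShift m n k lam I N k))
    (homega : ∀ t : Fin k, omegaWt m n lam (I t) (N t) =
        ((Finset.univ.filter fun s : Fin k => s < t ∧ I s = I t).card : ℤ) -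
        ((Finset.univ.filter fun s : Fin k => s < t ∧ N s = N t).card : ℤ)) :
    Relation.ReflTransGen (PSodd m n) lam (prefShift m n k lam I N k) := by

  have poly := prefShift_poly m n k lam I N hlam hmu
  suffices h : ∀ t : ℕ, t ≤ k →
      Relation.ReflTransGen (PSodd m n) lam (prefShift m n k lam I N t) from h k le_rfl
  intro t
  induction t with
  | zero => intro _; rw [prefShift_zero]
  | succ t ih =>
    intro ht
    have htk : t < k := ht
    have ih' := ih (le_of_lt htk)
    apply ih'.tail
    set t' : Fin k := ⟨t, htk⟩ with ht'
    have hstep : prefShift m n k lam I N (t + 1) =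
        singleShift m n (prefShift m n k lam I N t) (I t') (N t') :=
      prefShift_succ m n k lam I N t'
    refine ⟨⟨I t', N t', Or.inl hstep, ?_⟩, poly t, poly (t + 1)⟩
    have hom := homega t'
    have hIc : (Finset.univ.filter fun s : Fin k => s < t' ∧ I s = I t') =
        (Finset.univ.filter fun s : Fin k => (s : ℕ) < t ∧ I s = I t') := by
      apply Finset.filter_congr; intro s _; rw [Fin.lt_def]
    have hNc : (Finset.univ.filter fun s : Fin k => s < t' ∧ N s = N t') =
        (Finset.univ.filter fun s : Fin k => (s : ℕ) < t ∧ N s = N t') := by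
      apply Finset.filter_congr; intro s _; rw [Fin.lt_def]
    rw [hIc, hNc] at hom
    simp only [omegaWt, prefShift]
    simp only [omegaWt] at hom
    linarith
end
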